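/- arXiv:1507.07352 — 3 statements merged into one kernel-verified Lean document; each statement's English description precedes it below -/
import Mathlib

section
/- Let h be a 6-dimensional Lie algebra with a basis {e₁,…,e₆} such that (ω, ψ₊) with ω = e^{12}+e^{34}+e^{56}, ψ₊ = e^{135}−e^{146}−e^{236}−e^{245}, ψ₋ = e^{136}+e^{145}+e^{235}−e^{246} is half-flat (d(ω∧ω) = 0 and dψ₊ = 0), and let D be a derivation of h lying in sp(6,ℝ) with respect to ω in this basis. Then on g = h ⊕_D ℝξ, the 4-form (1/2)ω∧ω + ψ₊∧η is closed, where η is the dual of ξ; i.e., the G₂-form φ = ω∧η − ψ₋ is coclosed. -/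
open Finset BigOperators

/-- Kronecker delta as a real number. -/
def kd {n : ℕ} (a i : Fin n) : ℝ := if a = i then 1 else 0

/-- The 2-form `e^a ∧ e^b` evaluated on basis vectors `e_i, e_j`. -/
def pairF {n : ℕ} (a b i j : Fin n) : ℝ := kd a i * kd b j - kd a j * kd b i

/-- The 3-form `e^a ∧ e^b ∧ e^c` evaluated on basis vectors. -/
def tripF {n : ℕ} (a b c i j k : Fin n) : ℝ :=
  Matrix.det !![kd a i, kd a j, kd a k; kd b i, kd b j, kd b k; kd c i, kd c j, kd c k]

/-- The 4-form `e^a ∧ e^b ∧ e^c ∧ e^d` evaluated on basis vectors. -/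
def quadF {n : ℕ} (a b c d i j k l : Fin n) : ℝ :=
  Matrix.det !![kd a i, kd a j, kd a k, kd a l;
                kd b i, kd b j, kd b k, kd b l;
                kd c i, kd c j, kd c k, kd c l;
                kd d i, kd d j, kd d k, kd d l]

/-- Chevalley–Eilenberg differential of a 2-form, on basis vectors.
`br i a b` is the coefficient of `e_i` in `[e_a, e_b]`. -/
def d2 {n : ℕ} (br : Fin n → Fin n → Fin n → ℝ) (α : Fin n → Fin n → ℝ)
    (a b c : Fin n) : ℝ :=
  -(∑ m, br m a b * α m c) + (∑ m, br m a c * α m b) - (∑ m, br m b c * α m a)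

/-- Chevalley–Eilenberg differential of a 3-form, on basis vectors. -/
def d3 {n : ℕ} (br : Fin n → Fin n → Fin n → ℝ) (α : Fin n → Fin n → Fin n → ℝ)
    (a b c d : Fin n) : ℝ :=
  -(∑ m, br m a b * α m c d) + (∑ m, br m a c * α m b d) - (∑ m, br m a d * α m b c)
  - (∑ m, br m b c * α m a d) + (∑ m, br m b d * α m a c) - (∑ m, br m c d * α m a b)

/-- Chevalley–Eilenberg differential of a 4-form, on basis vectors. -/
def d4 {n : ℕ} (br : Fin n → Fin n → Fin n → ℝ)
    (α : Fin n → Fin n → Fin n → Fin n → ℝ) (a b c d e : Fin n) : ℝ :=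
  -(∑ m, br m a b * α m c d e) + (∑ m, br m a c * α m b d e) - (∑ m, br m a d * α m b c e)
  + (∑ m, br m a e * α m b c d) - (∑ m, br m b c * α m a d e) + (∑ m, br m b d * α m a c e)
  - (∑ m, br m b e * α m a c d) - (∑ m, br m c d * α m a b e) + (∑ m, br m c e * α m a b d)
  - (∑ m, br m d e * α m a b c)

/-- Wedge product of two 2-forms, evaluated on basis vectors. -/
def w22 {n : ℕ} (α β : Fin n → Fin n → ℝ) (i j k l : Fin n) : ℝ :=
  α i j * β k l - α i k * β j l + α i l * β j k
  + α j k * β i l - α j l * β i k + α k l * β i j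

/-- Wedge product of a 2-form and a 1-form, evaluated on basis vectors. -/
def w21 {n : ℕ} (α : Fin n → Fin n → ℝ) (β : Fin n → ℝ) (i j k : Fin n) : ℝ :=
  α i j * β k - α i k * β j + α j k * β i

/-- Wedge product of a 3-form and a 1-form, evaluated on basis vectors. -/
def w31 {n : ℕ} (α : Fin n → Fin n → Fin n → ℝ) (β : Fin n → ℝ) (i j k l : Fin n) : ℝ :=
  α i j k * β l - α i j l * β k + α i k l * β j - α j k l * β i

/-- `ω = e^{12} + e^{34} + e^{56}` (0-indexed). -/
def omega6 : Fin 6 → Fin 6 → ℝ := fun i j => pairF 0 1 i j + pairF 2 3 i j + pairF 4 5 i j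

/-- `ψ₊ = e^{135} − e^{146} − e^{236} − e^{245}` (0-indexed). -/
def psi6 : Fin 6 → Fin 6 → Fin 6 → ℝ := fun i j k =>
  tripF 0 2 4 i j k - tripF 0 3 5 i j k - tripF 1 2 5 i j k - tripF 1 3 4 i j k

/-- `ω` viewed on a 7-dimensional space (indices 0..5). -/
def omega7 : Fin 7 → Fin 7 → ℝ := fun i j => pairF 0 1 i j + pairF 2 3 i j + pairF 4 5 i j

/-- `ψ₊` viewed on a 7-dimensional space. -/
def psi7 : Fin 7 → Fin 7 → Fin 7 → ℝ := fun i j k =>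
  tripF 0 2 4 i j k - tripF 0 3 5 i j k - tripF 1 2 5 i j k - tripF 1 3 4 i j k

/-- `η = e^7`, the 1-form dual to the extra direction. -/
def eta7 : Fin 7 → ℝ := kd 6

/-- The real 6×6 representation of a complex 3×3 matrix: each entry `a+bi`
becomes the 2×2 block `[[a, b], [−b, a]]`. -/
def realRep (A : Matrix (Fin 3) (Fin 3) ℂ) : Matrix (Fin 6) (Fin 6) ℝ :=
  Matrix.of fun i j =>
    let p : Fin 3 := ⟨(i : ℕ) / 2, by have := i.isLt; omega⟩
    let q : Fin 3 := ⟨(j : ℕ) / 2, by have := j.isLt; omega⟩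
    if (i : ℕ) % 2 = 0 then
      (if (j : ℕ) % 2 = 0 then (A p q).re else (A p q).im)
    else
      (if (j : ℕ) % 2 = 0 then -(A p q).im else (A p q).re)

/-- Structure constants of the semidirect sum `g = h ⊕_D ℝξ`, where `f` are the
structure constants of `h` ( `f i a b` = coefficient of `e_i` in `[e_a,e_b]` ),
`ξ = e₇` and `[ξ, U] = D U`. -/
def brg (f : Fin 6 → Fin 6 → Fin 6 → ℝ) (D : Matrix (Fin 6) (Fin 6) ℝ) :
    Fin 7 → Fin 7 → Fin 7 → ℝ := fun i a b =>
  if hi : (i : ℕ) < 6 then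
    if ha : (a : ℕ) < 6 then
      if hb : (b : ℕ) < 6 then f ⟨i, hi⟩ ⟨a, ha⟩ ⟨b, hb⟩
      else -(D ⟨i, hi⟩ ⟨a, ha⟩)
    else
      if hb : (b : ℕ) < 6 then D ⟨i, hi⟩ ⟨b, hb⟩ else 0
  else 0

/-!
Write `g = h ⊕ ℝξ` and `⋆φ = ½ ω∧ω + ψ₊∧η`. The 5-form `d⋆φ` is alternating, so it is
determined by its values on `h⁵` and on `h⁴ × ξ`. Since `h` is a subalgebra and `η` vanishes on
it, the first restriction is `½ d_h(ω∧ω) = 0`. In the second, the brackets inside `h` produce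
`d_h ψ₊ = 0`, while the brackets `[U, ξ] = -DU` produce `-½ D·(ω∧ω)`, where `D·` is the action of
`D` on forms: it is a derivation of `∧`, and `D·ω = 0` is exactly `D ∈ sp(6,ℝ)`.
-/

section Alternating

variable {ι : Type*}

structure IsAlternating3 (β : ι → ι → ι → ℝ) : Prop where
  swap12 : ∀ i j k, β j i k = -β i j k
  swap23 : ∀ i j k, β i k j = -β i j k

structure IsAlternating4 (β : ι → ι → ι → ι → ℝ) : Prop where
  swap12 : ∀ i j k l, β j i k l = -β i j k l
  swap23 : ∀ i j k l, β i k j l = -β i j k l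
  swap34 : ∀ i j k l, β i j l k = -β i j k l

structure IsAlternating5 (F : ι → ι → ι → ι → ι → ℝ) : Prop where
  swap12 : ∀ a b c d e, F b a c d e = -F a b c d e
  swap23 : ∀ a b c d e, F a c b d e = -F a b c d e
  swap34 : ∀ a b c d e, F a b d c e = -F a b c d e
  swap45 : ∀ a b c d e, F a b c e d = -F a b c d e

theorem isAlternating3_tripF {n : ℕ} (a b c : Fin n) : IsAlternating3 (tripF a b c) := by
  constructor <;> intro i j k <;>
    simp only [tripF, Matrix.det_fin_three, Matrix.of_apply, Matrix.cons_val', Matrix.cons_val_zero,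
      Matrix.cons_val_fin_one, Matrix.cons_val_one, Matrix.cons_val] <;>
    ring

theorem IsAlternating4.const_mul_add {α β : ι → ι → ι → ι → ℝ} (hα : IsAlternating4 α)
    (hβ : IsAlternating4 β) (c : ℝ) :
    IsAlternating4 (fun i j k l => c * α i j k l + β i j k l) where
  swap12 i j k l := by rw [hα.swap12, hβ.swap12]; ring
  swap23 i j k l := by rw [hα.swap23, hβ.swap23]; ring
  swap34 i j k l := by rw [hα.swap34, hβ.swap34]; ring

theorem isAlternating4_w22 {n : ℕ} {α β : Fin n → Fin n → ℝ} (hα : ∀ i j, α j i = -α i j)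
    (hβ : ∀ i j, β j i = -β i j) : IsAlternating4 (w22 α β) where
  swap12 i j k l := by simp only [w22]; rw [hα j i, hβ j i]; ring
  swap23 i j k l := by simp only [w22]; rw [hα k j, hβ k j]; ring
  swap34 i j k l := by simp only [w22]; rw [hα l k, hβ l k]; ring

theorem isAlternating4_w31 {n : ℕ} {α : Fin n → Fin n → Fin n → ℝ} (hα : IsAlternating3 α)
    (β : Fin n → ℝ) : IsAlternating4 (w31 α β) where
  swap12 i j k l := by simp only [w31]; rw [hα.swap12 i j k, hα.swap12 i j l]; ring
  swap23 i j k l := by simp only [w31]; rw [hα.swap23 i j k, hα.swap12 j k l]; ring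
  swap34 i j k l := by simp only [w31]; rw [hα.swap23 i k l, hα.swap23 j k l]; ring

theorem IsAlternating4.comp {κ : Type*} {β : ι → ι → ι → ι → ℝ} (hβ : IsAlternating4 β)
    (φ : κ → ι) : IsAlternating4 fun i j k l => β (φ i) (φ j) (φ k) (φ l) where
  swap12 i j k l := hβ.swap12 (φ i) (φ j) (φ k) (φ l)
  swap23 i j k l := hβ.swap23 (φ i) (φ j) (φ k) (φ l)
  swap34 i j k l := hβ.swap34 (φ i) (φ j) (φ k) (φ l)

theorem IsAlternating5.fix_last {F : ι → ι → ι → ι → ι → ℝ} (hF : IsAlternating5 F) (e : ι) :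
    IsAlternating4 (fun a b c d => F a b c d e) where
  swap12 a b c d := hF.swap12 a b c d e
  swap23 a b c d := hF.swap23 a b c d e
  swap34 a b c d := hF.swap34 a b c d e

end Alternating

section Vanishing

variable {n : ℕ}

theorem IsAlternating4.eq_zero_of_castSucc
    {G : Fin (n + 1) → Fin (n + 1) → Fin (n + 1) → Fin (n + 1) → ℝ} (hG : IsAlternating4 G)
    (h₀ : ∀ a b c d : Fin n, G a.castSucc b.castSucc c.castSucc d.castSucc = 0)
    (hlast : ∀ a b c, G a b c (Fin.last n) = 0) (a b c d : Fin (n + 1)) : G a b c d = 0 := by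
  cases d using Fin.lastCases with
  | last => exact hlast a b c
  | cast d =>
  cases c using Fin.lastCases with
  | last => rw [hG.swap34, hlast, neg_zero]
  | cast c =>
  cases b using Fin.lastCases with
  | last => rw [hG.swap23, hG.swap34, hlast, neg_zero, neg_zero]
  | cast b =>
  cases a using Fin.lastCases with
  | last => rw [hG.swap12, hG.swap23, hG.swap34, hlast, neg_zero, neg_zero, neg_zero]
  | cast a => exact h₀ a b c d

theorem IsAlternating5.eq_zero_of_castSucc
    {F : Fin (n + 1) → Fin (n + 1) → Fin (n + 1) → Fin (n + 1) → Fin (n + 1) → ℝ}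
    (hF : IsAlternating5 F)
    (h₀ : ∀ a b c d e : Fin n, F a.castSucc b.castSucc c.castSucc d.castSucc e.castSucc = 0)
    (h₁ : ∀ a b c d : Fin n, F a.castSucc b.castSucc c.castSucc d.castSucc (Fin.last n) = 0)
    (a b c d e : Fin (n + 1)) : F a b c d e = 0 := by
  have hlast : ∀ a b c d, F a b c d (Fin.last n) = 0 :=
    (hF.fix_last _).eq_zero_of_castSucc h₁ fun a b c =>
      CharZero.eq_neg_self_iff.mp (hF.swap45 a b c _ _)
  cases e using Fin.lastCases with
  | last => exact hlast a b c d
  | cast e =>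
  cases d using Fin.lastCases with
  | last => rw [hF.swap45, hlast, neg_zero]
  | cast d =>
  cases c using Fin.lastCases with
  | last => rw [hF.swap34, hF.swap45, hlast, neg_zero, neg_zero]
  | cast c =>
  cases b using Fin.lastCases with
  | last => rw [hF.swap23, hF.swap34, hF.swap45, hlast, neg_zero, neg_zero, neg_zero]
  | cast b =>
  cases a using Fin.lastCases with
  | last => rw [hF.swap12, hF.swap23, hF.swap34, hF.swap45, hlast]; simp
  | cast a => exact h₀ a b c d e

end Vanishing

section ChevalleyEilenberg

variable {n : ℕ}

theorem isAlternating5_d4 {br : Fin n → Fin n → Fin n → ℝ}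
    {α : Fin n → Fin n → Fin n → Fin n → ℝ} (hbr : ∀ m x y, br m x y = -br m y x)
    (hα : IsAlternating4 α) : IsAlternating5 (d4 br α) where
  swap12 a b c d e := by
    simp only [d4, hbr _ b a, hα.swap23 _ a b, neg_mul, mul_neg, Finset.sum_neg_distrib]; ring
  swap23 a b c d e := by
    simp only [d4, hbr _ c b, hα.swap23 _ b c, hα.swap34 _ a b c, neg_mul, mul_neg,
      Finset.sum_neg_distrib]
    ring
  swap34 a b c d e := by
    simp only [d4, hbr _ d c, hα.swap23 _ c d, hα.swap34 _ _ c d, neg_mul, mul_neg,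
      Finset.sum_neg_distrib]
    ring
  swap45 a b c d e := by
    simp only [d4, hbr _ e d, hα.swap34 _ _ d e, neg_mul, mul_neg, Finset.sum_neg_distrib]; ring

theorem d4_const_mul (br : Fin n → Fin n → Fin n → ℝ) (α : Fin n → Fin n → Fin n → Fin n → ℝ)
    (r : ℝ) (a b c d e : Fin n) :
    d4 br (fun i j k l => r * α i j k l) a b c d e = r * d4 br α a b c d e := by
  simp only [d4, mul_left_comm _ r, ← Finset.mul_sum]; ring

end ChevalleyEilenberg

section DerivationAction

variable {n : ℕ}

def derivAct2 (D : Matrix (Fin n) (Fin n) ℝ) (α : Fin n → Fin n → ℝ) (i j : Fin n) : ℝ :=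
  ∑ m, D m i * α m j + ∑ m, D m j * α i m

def derivAct4 (D : Matrix (Fin n) (Fin n) ℝ) (β : Fin n → Fin n → Fin n → Fin n → ℝ)
    (i j k l : Fin n) : ℝ :=
  ∑ m, D m i * β m j k l + ∑ m, D m j * β i m k l + ∑ m, D m k * β i j m l
    + ∑ m, D m l * β i j k m

theorem derivAct4_w22 (D : Matrix (Fin n) (Fin n) ℝ) (α β : Fin n → Fin n → ℝ) :
    derivAct4 D (w22 α β) = w22 (derivAct2 D α) β + w22 α (derivAct2 D β) := by
  funext i j k l
  simp only [derivAct4, derivAct2, w22, Pi.add_apply, Finset.mul_sum, Finset.sum_mul,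
    ← Finset.sum_add_distrib, ← Finset.sum_sub_distrib]
  exact Finset.sum_congr rfl fun m _ => by ring

theorem derivAct4_const_mul (D : Matrix (Fin n) (Fin n) ℝ)
    (β : Fin n → Fin n → Fin n → Fin n → ℝ) (r : ℝ) (i j k l : Fin n) :
    derivAct4 D (fun i j k l => r * β i j k l) i j k l = r * derivAct4 D β i j k l := by
  simp only [derivAct4, mul_left_comm _ r, ← Finset.mul_sum]; ring

theorem derivAct2_eq_zero_of_skew {D : Matrix (Fin n) (Fin n) ℝ} {ω : Fin n → Fin n → ℝ}
    (hD : ∀ x y : Fin n → ℝ,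
      (∑ i, ∑ j, ω i j * (D.mulVec x) i * y j) + (∑ i, ∑ j, ω i j * x i * (D.mulVec y) j) = 0) :
    derivAct2 D ω = 0 := by
  funext a b
  simpa [derivAct2, Matrix.mulVec_single, Pi.single_apply, mul_comm] using
    hD (Pi.single a 1) (Pi.single b 1)

theorem IsAlternating4.derivAct4_eq {β : Fin n → Fin n → Fin n → Fin n → ℝ}
    (hβ : IsAlternating4 β) (D : Matrix (Fin n) (Fin n) ℝ) (a b c d : Fin n) :
    derivAct4 D β a b c d = ∑ m, D m a * β m b c d - ∑ m, D m b * β m a c d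
      + ∑ m, D m c * β m a b d - ∑ m, D m d * β m a b c := by
  simp only [derivAct4, ← Finset.sum_add_distrib, ← Finset.sum_sub_distrib]
  refine Finset.sum_congr rfl fun m _ => ?_
  rw [hβ.swap12 m a c d, hβ.swap23 a m b d, hβ.swap12 m a b d, hβ.swap34 a b m c,
    hβ.swap23 a m b c, hβ.swap12 m a b c]
  ring

end DerivationAction

section SemidirectSum

variable (f : Fin 6 → Fin 6 → Fin 6 → ℝ) (D : Matrix (Fin 6) (Fin 6) ℝ)

theorem brg_castSucc (m a b : Fin 6) :
    brg f D m.castSucc a.castSucc b.castSucc = f m a b := by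
  simp [brg]

theorem brg_castSucc_last (m a : Fin 6) :
    brg f D m.castSucc a.castSucc (Fin.last 6) = -D m a := by
  simp [brg]

theorem brg_last (a b : Fin 7) : brg f D (Fin.last 6) a b = 0 := by
  simp [brg]

theorem brg_antisymm (hf : ∀ i a b, f i a b = -f i b a) (i a b : Fin 7) :
    brg f D i a b = -brg f D i b a := by
  unfold brg
  split_ifs <;> first | exact hf _ _ _ | ring

theorem d4_brg_castSucc (α : Fin 7 → Fin 7 → Fin 7 → Fin 7 → ℝ) (a b c d e : Fin 6) :
    d4 (brg f D) α a.castSucc b.castSucc c.castSucc d.castSucc e.castSucc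
      = d4 f (fun m x y z => α m.castSucc x.castSucc y.castSucc z.castSucc) a b c d e := by
  simp only [d4, Fin.sum_univ_castSucc, brg_last, brg_castSucc, zero_mul, add_zero]

theorem d4_brg_castSucc_last {α : Fin 7 → Fin 7 → Fin 7 → Fin 7 → ℝ}
    (hα : IsAlternating4 α) (a b c d : Fin 6) :
    d4 (brg f D) α a.castSucc b.castSucc c.castSucc d.castSucc (Fin.last 6)
      = d3 f (fun m x y => α m.castSucc x.castSucc y.castSucc (Fin.last 6)) a b c d
        - derivAct4 D (fun m x y z => α m.castSucc x.castSucc y.castSucc z.castSucc) a b c d := by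
  rw [(hα.comp Fin.castSucc).derivAct4_eq]
  simp only [d4, d3, Fin.sum_univ_castSucc, brg_last, brg_castSucc, brg_castSucc_last, zero_mul,
    add_zero, neg_mul, Finset.sum_neg_distrib]
  ring

end SemidirectSum

section StarPhi

theorem omega7_castSucc (i j : Fin 6) : omega7 i.castSucc j.castSucc = omega6 i j := by
  simp [omega7, omega6, pairF, kd, Fin.ext_iff]

theorem psi7_castSucc (i j k : Fin 6) : psi7 i.castSucc j.castSucc k.castSucc = psi6 i j k := by
  simp [psi7, psi6, tripF, kd, Fin.ext_iff]

theorem omega7_last (i : Fin 7) : omega7 i (Fin.last 6) = 0 := by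
  simp [omega7, pairF, kd, Fin.ext_iff]

theorem eta7_castSucc (i : Fin 6) : eta7 i.castSucc = 0 := by
  simp only [eta7, kd, Fin.ext_iff, Fin.coe_ofNat_eq_mod, Fin.val_castSucc, ite_eq_right_iff,
    one_ne_zero, imp_false]
  omega

theorem eta7_last : eta7 (Fin.last 6) = 1 := by
  simp [eta7, kd]

theorem omega7_antisymm (i j : Fin 7) : omega7 j i = -omega7 i j := by
  simp only [omega7, pairF]; ring

theorem isAlternating3_psi7 : IsAlternating3 psi7 where
  swap12 i j k := by simp only [psi7, (isAlternating3_tripF _ _ _).swap12 i j k]; ring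
  swap23 i j k := by simp only [psi7, (isAlternating3_tripF _ _ _).swap23 i j k]; ring

noncomputable def starPhi : Fin 7 → Fin 7 → Fin 7 → Fin 7 → ℝ := fun i j k l =>
  (1 / 2) * w22 omega7 omega7 i j k l + w31 psi7 eta7 i j k l

theorem isAlternating4_starPhi : IsAlternating4 starPhi :=
  (isAlternating4_w22 omega7_antisymm omega7_antisymm).const_mul_add
    (isAlternating4_w31 isAlternating3_psi7 eta7) _

theorem starPhi_castSucc (i j k l : Fin 6) :
    starPhi i.castSucc j.castSucc k.castSucc l.castSucc = 1 / 2 * w22 omega6 omega6 i j k l := by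
  simp [starPhi, w22, w31, omega7_castSucc, eta7_castSucc]

theorem starPhi_castSucc_last (i j k : Fin 6) :
    starPhi i.castSucc j.castSucc k.castSucc (Fin.last 6) = psi6 i j k := by
  simp only [starPhi, w22, w31, omega7_last, psi7_castSucc, eta7_castSucc, eta7_last]
  ring

end StarPhi

theorem stmt_10_general (f : Fin 6 → Fin 6 → Fin 6 → ℝ)
    (hanti : ∀ i a b, f i a b = -f i b a)
    (homega2 : ∀ a b c d e : Fin 6, d4 f (w22 omega6 omega6) a b c d e = 0)
    (hpsi : ∀ a b c d : Fin 6, d3 f psi6 a b c d = 0)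
    (D : Matrix (Fin 6) (Fin 6) ℝ)
    (hsp : ∀ x y : Fin 6 → ℝ,
      (∑ i, ∑ j, omega6 i j * (D.mulVec x) i * y j)
        + (∑ i, ∑ j, omega6 i j * x i * (D.mulVec y) j) = 0) :
    ∀ a b c d e : Fin 7,
      d4 (brg f D)
        (fun i j k l => (1 / 2) * w22 omega7 omega7 i j k l + w31 psi7 eta7 i j k l)
        a b c d e = 0 := by
  have hD : derivAct2 D omega6 = 0 := derivAct2_eq_zero_of_skew hsp
  refine (isAlternating5_d4 (brg_antisymm f D hanti) isAlternating4_starPhi).eq_zero_of_castSucc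
    (fun a b c d e => ?_) (fun a b c d => ?_)
  · rw [d4_brg_castSucc]
    simp only [starPhi_castSucc]
    rw [d4_const_mul, homega2, mul_zero]
  · rw [d4_brg_castSucc_last f D isAlternating4_starPhi]
    simp only [starPhi_castSucc, starPhi_castSucc_last]
    rw [derivAct4_const_mul, derivAct4_w22, hD, hpsi]
    simp [w22]

/-- If `h` is a 6-dimensional Lie algebra (structure constants `f`) whose
SU(3)-structure `(ω, ψ₊)` is half-flat (`d(ω∧ω) = 0`, `dψ₊ = 0`), and `D` is a
derivation of `h` lying in `sp(6,ℝ)` with respect to `ω`, then on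
`g = h ⊕_D ℝξ` the 4-form `(1/2) ω∧ω + ψ₊∧η` is closed, i.e. the
G₂-form `φ = ω∧η − ψ₋` is coclosed. -/
theorem stmt_10 (f : Fin 6 → Fin 6 → Fin 6 → ℝ)
    (hanti : ∀ i a b, f i a b = -f i b a)
    (hjac : ∀ i a b c : Fin 6,
      (∑ m, f i m c * f m a b) + (∑ m, f i m a * f m b c) + (∑ m, f i m b * f m c a) = 0)
    (homega2 : ∀ a b c d e : Fin 6, d4 f (w22 omega6 omega6) a b c d e = 0)
    (hpsi : ∀ a b c d : Fin 6, d3 f psi6 a b c d = 0)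
    (D : Matrix (Fin 6) (Fin 6) ℝ)
    (hder : ∀ i a b : Fin 6,
      (∑ m, D i m * f m a b) = (∑ m, f i m b * D m a) + (∑ m, f i a m * D m b))
    (hsp : ∀ x y : Fin 6 → ℝ,
      (∑ i, ∑ j, omega6 i j * (D.mulVec x) i * y j)
        + (∑ i, ∑ j, omega6 i j * x i * (D.mulVec y) j) = 0) :
    ∀ a b c d e : Fin 7,
      d4 (brg f D)
        (fun i j k l => (1 / 2) * w22 omega7 omega7 i j k l + w31 psi7 eta7 i j k l)
        a b c d e = 0 :=
  stmt_10_general f hanti homega2 hpsi D hsp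
end

section
/- On the 7-dimensional Lie algebra with structure equations de¹ = e^{16}+e^{45}, de² = −e^{26}, de³ = −e^{36}+e^{25}, de⁴ = e^{46}, de⁵ = de⁶ = de⁷ = 0 (the direct sum g_{6,54}^{0,−1} ⊕ ℝ), the 3-form φ = e^{127}+e^{347}+e^{567}+e^{135}−e^{146}−e^{236}−e^{245} is closed. -/
open Finset BigOperators

/-- Structure constants of `g_{6,54}^{0,−1} ⊕ ℝ =
`(e^{16}+e^{45}, −e^{26}, −e^{36}+e^{25}, e^{46}, 0, 0, 0)`. -/
def bb15 : Fin 7 → Fin 7 → Fin 7 → ℝ := fun i a b =>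
  if i = 0 ∧ a = 0 ∧ b = 5 then -1
  else if i = 0 ∧ a = 3 ∧ b = 4 then -1
  else if i = 1 ∧ a = 1 ∧ b = 5 then 1
  else if i = 2 ∧ a = 2 ∧ b = 5 then 1
  else if i = 2 ∧ a = 1 ∧ b = 4 then -1
  else if i = 3 ∧ a = 3 ∧ b = 5 then -1
  else 0

def br15 : Fin 7 → Fin 7 → Fin 7 → ℝ := fun i a b => bb15 i a b - bb15 i b a

def phi15 : Fin 7 → Fin 7 → Fin 7 → ℝ := fun i j k =>
  tripF 0 1 6 i j k + tripF 2 3 6 i j k + tripF 4 5 6 i j k + psi7 i j k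

/-! All structure constants and coefficients of `φ` are integers, so the Chevalley–Eilenberg
differential of `φ` is the image of the same expression computed over `ℤ`, where the kernel
can evaluate it on all `7⁴` quadruples of basis vectors. -/

section IntegerModel

variable {n : ℕ}

def kdZ (a i : Fin n) : ℤ := if a = i then 1 else 0

lemma kd_eq_intCast (a i : Fin n) : kd a i = kdZ a i := by
  unfold kd kdZ; split_ifs <;> simp

def tripZ (a b c i j k : Fin n) : ℤ :=
  kdZ a i * kdZ b j * kdZ c k - kdZ a i * kdZ b k * kdZ c j
  - kdZ a j * kdZ b i * kdZ c k + kdZ a j * kdZ b k * kdZ c i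
  + kdZ a k * kdZ b i * kdZ c j - kdZ a k * kdZ b j * kdZ c i

lemma tripF_eq_intCast (a b c i j k : Fin n) : tripF a b c i j k = tripZ a b c i j k := by
  simp only [tripF, Matrix.det_fin_three, Matrix.of_apply, Matrix.cons_val', Matrix.cons_val_zero,
    Matrix.cons_val_one, Matrix.cons_val_two, Matrix.empty_val', Matrix.cons_val_fin_one,
    Matrix.head_cons, Matrix.head_fin_const, Matrix.tail_cons, tripZ, kd_eq_intCast]
  push_cast
  ring

def d3Z (br : Fin n → Fin n → Fin n → ℤ) (α : Fin n → Fin n → Fin n → ℤ) (a b c d : Fin n) : ℤ :=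
  -(∑ m, br m a b * α m c d) + (∑ m, br m a c * α m b d) - (∑ m, br m a d * α m b c)
  - (∑ m, br m b c * α m a d) + (∑ m, br m b d * α m a c) - (∑ m, br m c d * α m a b)

lemma d3_intCast (br : Fin n → Fin n → Fin n → ℤ) (α : Fin n → Fin n → Fin n → ℤ)
    (a b c d : Fin n) :
    d3 (fun i a b => (br i a b : ℝ)) (fun i j k => (α i j k : ℝ)) a b c d = d3Z br α a b c d := by
  simp only [d3, d3Z]
  push_cast
  rfl

end IntegerModel

def bbZ : Fin 7 → Fin 7 → Fin 7 → ℤ := fun i a b =>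
  if i = 0 ∧ a = 0 ∧ b = 5 then -1
  else if i = 0 ∧ a = 3 ∧ b = 4 then -1
  else if i = 1 ∧ a = 1 ∧ b = 5 then 1
  else if i = 2 ∧ a = 2 ∧ b = 5 then 1
  else if i = 2 ∧ a = 1 ∧ b = 4 then -1
  else if i = 3 ∧ a = 3 ∧ b = 5 then -1
  else 0

def brZ : Fin 7 → Fin 7 → Fin 7 → ℤ := fun i a b => bbZ i a b - bbZ i b a

def phiZ : Fin 7 → Fin 7 → Fin 7 → ℤ := fun i j k =>
  tripZ 0 1 6 i j k + tripZ 2 3 6 i j k + tripZ 4 5 6 i j k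
  + (tripZ 0 2 4 i j k - tripZ 0 3 5 i j k - tripZ 1 2 5 i j k - tripZ 1 3 4 i j k)

lemma br15_eq_intCast : br15 = fun i a b => (brZ i a b : ℝ) := by
  funext i a b
  simp only [br15, bb15, brZ, bbZ]
  split_ifs <;> norm_num

lemma phi15_eq_intCast : phi15 = fun i j k => (phiZ i j k : ℝ) := by
  funext i j k
  simp only [phi15, psi7, phiZ, tripF_eq_intCast]
  push_cast
  rfl

lemma d3Z_brZ_phiZ_eq_zero : ∀ a b c d : Fin 7, d3Z brZ phiZ a b c d = 0 := by
  decide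

theorem stmt_15 : ∀ a b c d : Fin 7, d3 br15 phi15 a b c d = 0 := by
  intro a b c d
  rw [br15_eq_intCast, phi15_eq_intCast, d3_intCast, d3Z_brZ_phiZ_eq_zero, Int.cast_zero]
end

section
/- For every α ≥ 0 and a ∈ ℝ, the 7-dimensional Lie algebra with structure equations de¹ = α e^{15}+e^{35}−a e^{37}, de² = −α e^{25}+e^{45}−a e^{47}, de³ = −e^{15}+α e^{35}+a e^{17}, de⁴ = −e^{25}−α e^{45}+a e^{27}, de⁵ = de⁶ = de⁷ = 0 satisfies d² = 0, and the 3-form φ = e^{127}+e^{347}+e^{567}+e^{135}−e^{146}−e^{236}−e^{245} is closed on it. -/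
open Finset BigOperators

/-- Structure constants of `(g_{5,17}^{α,−α,1} ⊕ ℝ) ⊕_D ℝe₇` for parameters `α, a`. -/
def bb19 (al a : ℝ) : Fin 7 → Fin 7 → Fin 7 → ℝ := fun i x y =>
  if i = 0 ∧ x = 0 ∧ y = 4 then -al
  else if i = 0 ∧ x = 2 ∧ y = 4 then -1
  else if i = 0 ∧ x = 2 ∧ y = 6 then a
  else if i = 1 ∧ x = 1 ∧ y = 4 then al
  else if i = 1 ∧ x = 3 ∧ y = 4 then -1
  else if i = 1 ∧ x = 3 ∧ y = 6 then a
  else if i = 2 ∧ x = 0 ∧ y = 4 then 1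
  else if i = 2 ∧ x = 2 ∧ y = 4 then -al
  else if i = 2 ∧ x = 0 ∧ y = 6 then -a
  else if i = 3 ∧ x = 1 ∧ y = 4 then 1
  else if i = 3 ∧ x = 3 ∧ y = 4 then al
  else if i = 3 ∧ x = 1 ∧ y = 6 then -a
  else 0

def br19 (al a : ℝ) : Fin 7 → Fin 7 → Fin 7 → ℝ := fun i x y =>
  bb19 al a i x y - bb19 al a i y x

def phi19 : Fin 7 → Fin 7 → Fin 7 → ℝ := fun i j k =>
  tripF 0 1 6 i j k + tripF 2 3 6 i j k + tripF 4 5 6 i j k + psi7 i j k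

/-!
Both identities are polynomial in the parameters: the bracket is affine in `(α, a)`, so `d² = 0`,
which is the Jacobi identity, is quadratic in them and `dφ = 0` is linear. Writing the bracket as
`c₀ + α c₁ + a c₂` with integer structure constants `cₖ` reduces both to finitely many identities
between integers, which are checked by evaluation. Since the Jacobiator of an antisymmetric bracket
is alternating, only increasing index triples need to be checked for `d² = 0`.
-/

lemma eq_zero_of_antisymm_of_lt {α G : Type*} [LinearOrder α] [AddGroup G] [IsAddTorsionFree G]
    {f : α → α → α → G} (h₁₂ : ∀ x y z, f y x z = -f x y z) (h₂₃ : ∀ x y z, f x z y = -f x y z)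
    (hlt : ∀ x y z, x < y → y < z → f x y z = 0) (x y z : α) : f x y z = 0 := by
  have hcyc : ∀ x y z, f y z x = f x y z := fun x y z => by rw [h₂₃ y x z, h₁₂ x y z, neg_neg]
  have h₁₃ : ∀ x y z, f z y x = -f x y z := fun x y z => by rw [h₁₂ y z x, hcyc]
  rcases lt_trichotomy x y with hxy | rfl | hxy
  · rcases lt_trichotomy y z with hyz | rfl | hyz
    · exact hlt x y z hxy hyz
    · exact self_eq_neg.mp (h₂₃ x y y)
    rcases lt_trichotomy x z with hxz | rfl | hxz
    · rw [← neg_eq_zero, ← h₂₃]; exact hlt x z y hxz hyz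
    · exact self_eq_neg.mp (h₁₃ x y x)
    · rw [hcyc z x y]; exact hlt z x y hxz hxy
  · exact self_eq_neg.mp (h₁₂ x x z)
  rcases lt_trichotomy x z with hxz | rfl | hxz
  · rw [← neg_eq_zero, ← h₁₂]; exact hlt y x z hxy hxz
  · exact self_eq_neg.mp (h₁₃ x y x)
  rcases lt_trichotomy y z with hyz | rfl | hyz
  · rw [← hcyc]; exact hlt y z x hyz hxz
  · exact self_eq_neg.mp (h₂₃ x y y)
  · rw [← neg_eq_zero, ← h₁₃]; exact hlt z y x hyz hxy

section ChevalleyEilenberg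

variable {R : Type*} [CommRing R] {n : ℕ}

def jacobiator (p q : Fin n → Fin n → Fin n → R) (i x y z : Fin n) : R :=
  ∑ m, (p m x y * q i m z - p m x z * q i m y + p m y z * q i m x)

def ceD3 (br : Fin n → Fin n → Fin n → R) (φ : Fin n → Fin n → Fin n → R) (w x y z : Fin n) : R :=
  -(∑ m, br m w x * φ m y z) + (∑ m, br m w y * φ m x z) - (∑ m, br m w z * φ m x y)
  - (∑ m, br m x y * φ m w z) + (∑ m, br m x z * φ m w y) - (∑ m, br m y z * φ m w x)

variable (p p' q q' : Fin n → Fin n → Fin n → R) (s : R) (i x y z : Fin n)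

lemma jacobiator_add_left :
    jacobiator (p + p') q i x y z = jacobiator p q i x y z + jacobiator p' q i x y z := by
  simp only [jacobiator, Pi.add_apply, ← sum_add_distrib]
  exact sum_congr rfl fun _ _ => by ring

lemma jacobiator_add_right :
    jacobiator p (q + q') i x y z = jacobiator p q i x y z + jacobiator p q' i x y z := by
  simp only [jacobiator, Pi.add_apply, ← sum_add_distrib]
  exact sum_congr rfl fun _ _ => by ring

lemma jacobiator_smul_left : jacobiator (s • p) q i x y z = s * jacobiator p q i x y z := by
  simp only [jacobiator, Pi.smul_apply, smul_eq_mul, mul_sum]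
  exact sum_congr rfl fun _ _ => by ring

lemma jacobiator_smul_right : jacobiator p (s • q) i x y z = s * jacobiator p q i x y z := by
  simp only [jacobiator, Pi.smul_apply, smul_eq_mul, mul_sum]
  exact sum_congr rfl fun _ _ => by ring

lemma jacobiator_swap₁₂ (hp : ∀ m x y, p m y x = -p m x y) :
    jacobiator p q i y x z = -jacobiator p q i x y z := by
  simp only [jacobiator, ← sum_neg_distrib]
  exact sum_congr rfl fun m _ => by rw [hp m x y]; ring

lemma jacobiator_swap₂₃ (hp : ∀ m x y, p m y x = -p m x y) :
    jacobiator p q i x z y = -jacobiator p q i x y z := by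
  simp only [jacobiator, ← sum_neg_distrib]
  exact sum_congr rfl fun m _ => by rw [hp m y z]; ring

lemma ceD3_add_left (φ : Fin n → Fin n → Fin n → R) (w : Fin n) :
    ceD3 (p + p') φ w x y z = ceD3 p φ w x y z + ceD3 p' φ w x y z := by
  simp only [ceD3, Pi.add_apply, add_mul, sum_add_distrib]
  ring

lemma ceD3_smul_left (φ : Fin n → Fin n → Fin n → R) (w : Fin n) :
    ceD3 (s • p) φ w x y z = s * ceD3 p φ w x y z := by
  simp only [ceD3, Pi.smul_apply, smul_eq_mul, mul_assoc, ← mul_sum]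
  ring

lemma jacobiator_intCast (p q : Fin n → Fin n → Fin n → ℤ) :
    jacobiator (fun m x y => (p m x y : R)) (fun m x y => (q m x y : R)) i x y z =
      jacobiator p q i x y z := by
  push_cast [jacobiator]
  rfl

lemma ceD3_intCast (p φ : Fin n → Fin n → Fin n → ℤ) (w : Fin n) :
    ceD3 (fun m x y => (p m x y : R)) (fun m x y => (φ m x y : R)) w x y z =
      ceD3 p φ w x y z := by
  push_cast [ceD3]
  rfl

end ChevalleyEilenberg

lemma d2_neg_eq_jacobiator {n : ℕ} (br : Fin n → Fin n → Fin n → ℝ) (i x y z : Fin n) :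
    d2 br (fun u v => -br i u v) x y z = jacobiator br br i x y z := by
  simp only [d2, jacobiator, mul_neg, sum_neg_distrib, sum_add_distrib, sum_sub_distrib]
  ring

lemma d3_eq_ceD3 {n : ℕ} (br φ : Fin n → Fin n → Fin n → ℝ) (w x y z : Fin n) :
    d3 br φ w x y z = ceD3 br φ w x y z := rfl

section Bracket19

variable {R : Type*} [CommRing R]

/-- `bb19` with coefficients in an arbitrary ring, so that its integer instances can be evaluated
by `decide`. -/
def bb19Ring (al a : R) : Fin 7 → Fin 7 → Fin 7 → R := fun i x y =>
  if i = 0 ∧ x = 0 ∧ y = 4 then -al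
  else if i = 0 ∧ x = 2 ∧ y = 4 then -1
  else if i = 0 ∧ x = 2 ∧ y = 6 then a
  else if i = 1 ∧ x = 1 ∧ y = 4 then al
  else if i = 1 ∧ x = 3 ∧ y = 4 then -1
  else if i = 1 ∧ x = 3 ∧ y = 6 then a
  else if i = 2 ∧ x = 0 ∧ y = 4 then 1
  else if i = 2 ∧ x = 2 ∧ y = 4 then -al
  else if i = 2 ∧ x = 0 ∧ y = 6 then -a
  else if i = 3 ∧ x = 1 ∧ y = 4 then 1
  else if i = 3 ∧ x = 3 ∧ y = 4 then al
  else if i = 3 ∧ x = 1 ∧ y = 6 then -a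
  else 0

lemma bb19_eq_bb19Ring (al a : ℝ) : bb19 al a = bb19Ring al a := rfl

lemma bb19Ring_intCast (al a : ℤ) (i x y : Fin 7) :
    ((bb19Ring al a i x y : ℤ) : R) = bb19Ring (al : R) a i x y := by
  simp only [bb19Ring, apply_ite (Int.cast : ℤ → R), Int.cast_neg, Int.cast_one, Int.cast_zero]

lemma bb19Ring_eq_affine (al a : R) (i x y : Fin 7) :
    bb19Ring al a i x y = bb19Ring 0 0 i x y + al * (bb19Ring 1 0 i x y - bb19Ring 0 0 i x y) +
      a * (bb19Ring 0 1 i x y - bb19Ring 0 0 i x y) := by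
  simp only [bb19Ring, ite_sub_ite, mul_ite, ite_add_ite]
  ring_nf

def br19Ring (al a : R) : Fin 7 → Fin 7 → Fin 7 → R := fun i x y =>
  bb19Ring al a i x y - bb19Ring al a i y x

def br19₀ : Fin 7 → Fin 7 → Fin 7 → ℤ := br19Ring 0 0

def br19₁ : Fin 7 → Fin 7 → Fin 7 → ℤ := br19Ring 1 0 - br19Ring 0 0

def br19₂ : Fin 7 → Fin 7 → Fin 7 → ℤ := br19Ring 0 1 - br19Ring 0 0

lemma br19_eq (al a : ℝ) :
    br19 al a = (fun i x y => (br19₀ i x y : ℝ)) + al • (fun i x y => (br19₁ i x y : ℝ)) +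
      a • (fun i x y => (br19₂ i x y : ℝ)) := by
  funext i x y
  simp only [br19, bb19_eq_bb19Ring, bb19Ring_eq_affine al a, br19₀, br19₁, br19₂, br19Ring,
    bb19Ring_intCast, Pi.add_apply, Pi.sub_apply, Pi.smul_apply, smul_eq_mul, Int.cast_sub]
  push_cast
  ring

def kroneckerDelta {n : ℕ} (a i : Fin n) : R := if a = i then 1 else 0

lemma kroneckerDelta_intCast {n : ℕ} (a i : Fin n) :
    ((kroneckerDelta a i : ℤ) : R) = kroneckerDelta a i := by
  simp only [kroneckerDelta, apply_ite (Int.cast : ℤ → R), Int.cast_one, Int.cast_zero]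

def tripleForm {n : ℕ} (a b c i j k : Fin n) : R :=
  kroneckerDelta a i *
      (kroneckerDelta b j * kroneckerDelta c k - kroneckerDelta b k * kroneckerDelta c j)
    - kroneckerDelta a j *
      (kroneckerDelta b i * kroneckerDelta c k - kroneckerDelta b k * kroneckerDelta c i)
    + kroneckerDelta a k *
      (kroneckerDelta b i * kroneckerDelta c j - kroneckerDelta b j * kroneckerDelta c i)

lemma tripF_eq_tripleForm {n : ℕ} (a b c i j k : Fin n) :
    tripF a b c i j k = tripleForm a b c i j k := by
  simp only [tripF, Matrix.det_fin_three, Matrix.of_apply, Matrix.cons_val', Matrix.cons_val_zero,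
    Matrix.cons_val_one, Matrix.cons_val_two, Matrix.tail_cons,
    Matrix.empty_val', Matrix.cons_val_fin_one, Matrix.vecHead, tripleForm]
  unfold kd kroneckerDelta
  ring

lemma tripleForm_intCast {n : ℕ} (a b c i j k : Fin n) :
    ((tripleForm a b c i j k : ℤ) : R) = tripleForm a b c i j k := by
  simp only [tripleForm, Int.cast_add, Int.cast_sub, Int.cast_mul, kroneckerDelta_intCast]

def phi19Ring : Fin 7 → Fin 7 → Fin 7 → R := fun i j k =>
  tripleForm 0 1 6 i j k + tripleForm 2 3 6 i j k + tripleForm 4 5 6 i j k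
    + tripleForm 0 2 4 i j k - tripleForm 0 3 5 i j k - tripleForm 1 2 5 i j k
    - tripleForm 1 3 4 i j k

lemma phi19_eq : phi19 = fun i j k => ((phi19Ring i j k : ℤ) : ℝ) := by
  funext i j k
  simp only [phi19, psi7, phi19Ring, tripF_eq_tripleForm, Int.cast_add, Int.cast_sub,
    tripleForm_intCast]
  ring

end Bracket19

lemma br19_swap (al a : ℝ) (i x y : Fin 7) : br19 al a i y x = -br19 al a i x y :=
  (neg_sub _ _).symm

lemma jacobiator_br19_coeffs : ∀ i x y z : Fin 7, x < y → y < z →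
    jacobiator br19₀ br19₀ i x y z = 0 ∧ jacobiator br19₁ br19₁ i x y z = 0 ∧
    jacobiator br19₂ br19₂ i x y z = 0 ∧
    jacobiator br19₁ br19₀ i x y z = -jacobiator br19₀ br19₁ i x y z ∧
    jacobiator br19₂ br19₀ i x y z = -jacobiator br19₀ br19₂ i x y z ∧
    jacobiator br19₂ br19₁ i x y z = -jacobiator br19₁ br19₂ i x y z := by
  decide

lemma ceD3_br19_coeffs : ∀ w x y z : Fin 7,
    ceD3 br19₀ phi19Ring w x y z = 0 ∧ ceD3 br19₁ phi19Ring w x y z = 0 ∧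
    ceD3 br19₂ phi19Ring w x y z = 0 := by
  decide

lemma d2_br19_eq_zero (al a : ℝ) (i x y z : Fin 7) :
    d2 (br19 al a) (fun u v => -(br19 al a i u v)) x y z = 0 := by
  rw [d2_neg_eq_jacobiator]
  refine eq_zero_of_antisymm_of_lt (jacobiator_swap₁₂ _ _ i · · · (br19_swap al a))
    (jacobiator_swap₂₃ _ _ i · · · (br19_swap al a)) (fun x y z hxy hyz => ?_) x y z
  obtain ⟨h₀₀, h₁₁, h₂₂, h₁₀, h₂₀, h₂₁⟩ := jacobiator_br19_coeffs i x y z hxy hyz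
  rw [br19_eq]
  simp only [jacobiator_add_left, jacobiator_add_right, jacobiator_smul_left,
    jacobiator_smul_right, jacobiator_intCast, h₀₀, h₁₁, h₂₂, h₁₀, h₂₀, h₂₁]
  push_cast
  ring

lemma d3_br19_phi19_eq_zero (al a : ℝ) (w x y z : Fin 7) : d3 (br19 al a) phi19 w x y z = 0 := by
  obtain ⟨h₀, h₁, h₂⟩ := ceD3_br19_coeffs w x y z
  rw [d3_eq_ceD3, br19_eq, phi19_eq]
  simp only [ceD3_add_left, ceD3_smul_left, ceD3_intCast, h₀, h₁, h₂, Int.cast_zero, mul_zero,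
    add_zero]

theorem stmt_19_general (al a : ℝ) :
    (∀ i x y z : Fin 7, d2 (br19 al a) (fun u v => -(br19 al a i u v)) x y z = 0) ∧
    (∀ w x y z : Fin 7, d3 (br19 al a) phi19 w x y z = 0) :=
  ⟨d2_br19_eq_zero al a, d3_br19_phi19_eq_zero al a⟩

theorem stmt_19 (al a : ℝ) (hal : 0 ≤ al) :
    (∀ i x y z : Fin 7, d2 (br19 al a) (fun u v => -(br19 al a i u v)) x y z = 0) ∧
    (∀ w x y z : Fin 7, d3 (br19 al a) phi19 w x y z = 0) :=
  stmt_19_general al a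
end
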